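/- arXiv:1902.09533 — 2 statements merged into one kernel-verified Lean document; each statement's English description precedes it below -/
import Mathlib

section
/- Let E be a Banach space, K ⊆ ℝ × E nonempty and weakly compact, and C ⊆ E nonempty, closed, and convex. Define V: E → ℝ ∪ {+∞} by V(x) = min{r : (r,y) ∈ K, y ∈ C + x} (with V(x) = +∞ when no such (r,y) exists). Then V is weakly lower semicontinuous on E, i.e., its epigraph {(r,x) : V(x) ≤ r} is weakly closed in ℝ × E. -/
/-!
Since `K` is compact, the infimum defining `valueFn K C x` is attained as soon as it is finite,
so `valueFn K C x ≤ r` holds exactly when `(r, x) = p + d` with `p ∈ K` and `d ∈ [0, ∞) × (-C)`.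
The epigraph is therefore a compact set plus a closed convex set. The latter is weakly closed by
Mazur's theorem, the former stays compact in the coarser weak topology, and in a topological group
a compact set plus a closed set is closed.
-/

/-- The value function of the abstract perturbed problem:
`V(x) = inf {r : (r,y) ∈ K, y ∈ C + x}` (`+∞` if infeasible). -/
noncomputable def valueFn {E : Type*} [NormedAddCommGroup E] [NormedSpace ℝ E]
    (K : Set (ℝ × E)) (C : Set E) (x : E) : EReal :=
  sInf ((fun p : ℝ × E => (p.1 : EReal)) '' {p ∈ K | p.2 - x ∈ C})

open Set Pointwise

section WeakSpace

variable {E : Type*} [AddCommGroup E] [Module ℝ E] [TopologicalSpace E]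

theorem toWeakSpace_image (s : Set E) : toWeakSpace ℝ E '' s = s := image_id s

theorem IsCompact.weakSpace {K : Set E} (hK : IsCompact K) :
    IsCompact (X := WeakSpace ℝ E) K :=
  toWeakSpace_image K ▸ hK.image (toWeakSpaceCLM ℝ E).continuous

variable [IsTopologicalAddGroup E] [ContinuousSMul ℝ E] [LocallyConvexSpace ℝ E]

theorem IsClosed.weakSpace_of_convex {C : Set E} (hC : IsClosed C) (hCconv : Convex ℝ C) :
    IsClosed (X := WeakSpace ℝ E) C := by
  rw [← toWeakSpace_image C, ← hC.closure_eq, hCconv.toWeakSpace_closure ℝ]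
  exact isClosed_closure

theorem IsCompact.weakSpace_isClosed_add {K D : Set E} (hK : IsCompact K) (hD : IsClosed D)
    (hDconv : Convex ℝ D) : IsClosed (X := WeakSpace ℝ E) (K + D) :=
  (hD.weakSpace_of_convex hDconv).add_left_of_isCompact hK.weakSpace

end WeakSpace

section ValueFn

variable {E : Type*} [NormedAddCommGroup E] [NormedSpace ℝ E] {K : Set (ℝ × E)} {C : Set E}

theorem exists_valueFn_eq (hK : IsCompact K) (hC : IsClosed C) {x : E}
    (hx : ∃ p ∈ K, p.2 - x ∈ C) : ∃ p ∈ K, p.2 - x ∈ C ∧ (p.1 : EReal) = valueFn K C x := by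
  have hcpt : IsCompact {p ∈ K | p.2 - x ∈ C} :=
    hK.inter_right (hC.preimage (continuous_snd.sub continuous_const))
  obtain ⟨p, hpK, hpC⟩ := hx
  obtain ⟨q, hq, hqV⟩ := (hcpt.image (continuous_coe_real_ereal.comp continuous_fst)).sInf_mem
    ⟨_, p, ⟨hpK, hpC⟩, rfl⟩
  exact ⟨q, hq.1, hq.2, hqV⟩

theorem valueFn_le_coe_iff (hK : IsCompact K) (hC : IsClosed C) {x : E} {r : ℝ} :
    valueFn K C x ≤ r ↔ ∃ p ∈ K, p.2 - x ∈ C ∧ p.1 ≤ r := by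
  constructor
  · intro hV
    have hx : ∃ p ∈ K, p.2 - x ∈ C := by
      by_contra! hx
      have hempty : {p ∈ K | p.2 - x ∈ C} = ∅ :=
        eq_empty_of_forall_notMem fun p hp => hx p hp.1 hp.2
      simp [valueFn, hempty] at hV
    obtain ⟨p, hpK, hpC, hp⟩ := exists_valueFn_eq hK hC hx
    exact ⟨p, hpK, hpC, EReal.coe_le_coe_iff.1 (hp ▸ hV)⟩
  · rintro ⟨p, hpK, hpC, hpr⟩
    exact le_trans (sInf_le (mem_image_of_mem _ ⟨hpK, hpC⟩)) (EReal.coe_le_coe_iff.2 hpr)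

theorem setOf_valueFn_le_eq_add (hK : IsCompact K) (hC : IsClosed C) :
    {q : ℝ × E | valueFn K C q.2 ≤ q.1} = K + Ici 0 ×ˢ (-C) := by
  ext q
  rw [mem_ofPred_eq, valueFn_le_coe_iff hK hC, mem_add]
  constructor
  · rintro ⟨p, hpK, hpC, hpr⟩
    exact ⟨p, hpK, q - p, ⟨sub_nonneg.2 hpr, (by simpa using hpC)⟩, add_sub_cancel p q⟩
  · rintro ⟨p, hpK, d, ⟨hd₁, hd₂⟩, rfl⟩
    exact ⟨p, hpK, by simpa using hd₂, le_add_of_nonneg_right hd₁⟩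

end ValueFn

theorem valueFn_weakly_lsc_general
    {E : Type*} [NormedAddCommGroup E] [NormedSpace ℝ E]
    (K : Set (ℝ × E)) (C : Set E)
    (hKcomp : IsCompact (K : Set (WeakSpace ℝ (ℝ × E))))
    (hCclosed : IsClosed C) (hCconv : Convex ℝ C) :
    IsClosed ({p : ℝ × E | valueFn K C p.2 ≤ (p.1 : EReal)} :
      Set (WeakSpace ℝ (ℝ × E))) := by
  -- The ascription in `hKcomp` does not change the topology: `K` is compact in the norm topology.
  have h := hKcomp.weakSpace_isClosed_add (isClosed_Ici.prod hCclosed.neg)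
    ((convex_Ici 0).prod hCconv.neg)
  rwa [← setOf_valueFn_le_eq_add hKcomp hCclosed] at h

/-- If `K ⊆ ℝ × E` is nonempty and weakly compact and `C ⊆ E` is
nonempty, closed and convex, then the value function is weakly lower semicontinuous:
its epigraph is weakly closed in `ℝ × E`. -/
theorem valueFn_weakly_lsc
    {E : Type*} [NormedAddCommGroup E] [NormedSpace ℝ E]
    (K : Set (ℝ × E)) (C : Set E)
    (hKne : K.Nonempty)
    (hKcomp : IsCompact (K : Set (WeakSpace ℝ (ℝ × E))))
    (hCne : C.Nonempty) (hCclosed : IsClosed C) (hCconv : Convex ℝ C) :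
    IsClosed ({p : ℝ × E | valueFn K C p.2 ≤ (p.1 : EReal)} :
      Set (WeakSpace ℝ (ℝ × E))) :=
  valueFn_weakly_lsc_general K C hKcomp hCclosed hCconv
end

section
/- Let (T,Σ,μ) be a complete finite measure space, E a separable Banach space, and Γ: T ⇉ E an integrably bounded multifunction with measurable graph. Then the set S¹_Γ of Bochner integrable selectors of Γ is nonempty, and consequently the Bochner integral ∫Γ dμ = {∫f dμ : f ∈ S¹_Γ} is nonempty. -/
/-!
A set in `Σ ⊗ Borel(E)` involves only countably many sets of `Σ`, so the graph of `Γ` is the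
preimage of a Borel set `H' ⊆ (ℕ → ℕ) × E` under `φ × id` for some measurable `φ : T → ℕ → ℕ`.
Being Borel in a Polish space, `H'` is a continuous image `G(ℕ^ℕ)`, so it suffices to find a
measurable `τ` with `(G (τ t)).1 = φ t`: then `t ↦ (G (τ t)).2` is a measurable selector, and it is
integrable because `ψ` dominates it. For `τ t` we take the leftmost branch: `τ t n` is the least `k`
such that `φ t` stays in the image of the cylinder of `(τ t 0, …, τ t (n-1), k)`. It is measurable
because `μ` is complete and preimages under `φ` of continuous images of closed subsets of `ℕ^ℕ`
are null-measurable (Choquet's capacity argument: inner approximation by the preimages of the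
compact images of the boxes `{σ ≤ b}`).
-/

open MeasureTheory Set Filter Topology PiNat
open scoped ENNReal

namespace MeasureTheory

variable {T : Type*}

section Capacity

def boundedProj (R : (ℕ → ℕ) → T → Prop) (b : ℕ → ℕ) (n : ℕ) : Set T :=
  {t | ∃ σ, (∀ i < n, σ i ≤ b i) ∧ R σ t}

variable (R : (ℕ → ℕ) → T → Prop)

theorem boundedProj_zero (b : ℕ → ℕ) : boundedProj R b 0 = {t | ∃ σ, R σ t} := by
  simp [boundedProj]

theorem boundedProj_congr {b b' : ℕ → ℕ} {n : ℕ} (h : ∀ i < n, b i = b' i) :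
    boundedProj R b n = boundedProj R b' n := by
  ext t
  refine exists_congr fun σ => and_congr_left' (forall₂_congr fun i hi => ?_)
  rw [h i hi]

theorem boundedProj_eq_iUnion_update (b : ℕ → ℕ) (n : ℕ) :
    boundedProj R b n = ⋃ N, boundedProj R (Function.update b n N) (n + 1) := by
  ext t
  simp only [boundedProj, mem_iUnion]
  constructor
  · rintro ⟨σ, hσ, hR⟩
    refine ⟨σ n, σ, fun i hi => ?_, hR⟩
    rcases Nat.lt_succ_iff_lt_or_eq.1 hi with hi | rfl
    · simpa [Function.update_of_ne hi.ne] using hσ i hi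
    · simp
  · rintro ⟨N, σ, hσ, hR⟩
    refine ⟨σ, fun i hi => ?_, hR⟩
    simpa [Function.update_of_ne hi.ne] using hσ i (Nat.lt_succ_of_lt hi)

theorem monotone_boundedProj_update (b : ℕ → ℕ) (n : ℕ) :
    Monotone fun N => boundedProj R (Function.update b n N) (n + 1) := by
  intro N N' hNN' t ⟨σ, hσ, hR⟩
  refine ⟨σ, fun i hi => (hσ i hi).trans ?_, hR⟩
  rcases eq_or_ne i n with rfl | hin
  · simpa using hNN'
  · simp [Function.update_of_ne hin]

variable [MeasurableSpace T] (μ : Measure T) [IsFiniteMeasure μ]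

theorem exists_measure_boundedProj_le_add (b : ℕ → ℕ) (n : ℕ) {δ : ℝ≥0∞} (hδ : δ ≠ 0) :
    ∃ N, μ (boundedProj R b n) ≤ μ (boundedProj R (Function.update b n N) (n + 1)) + δ := by
  by_cases h0 : μ (boundedProj R b n) = 0
  · exact ⟨0, by simp [h0]⟩
  have hlt : μ (boundedProj R b n) - δ <
      ⨆ N, μ (boundedProj R (Function.update b n N) (n + 1)) := by
    rw [← (monotone_boundedProj_update R b n).measure_iUnion, ← boundedProj_eq_iUnion_update]
    exact ENNReal.sub_lt_self (measure_ne_top μ _) h0 hδ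
  obtain ⟨N, hN⟩ := lt_iSup_iff.1 hlt
  exact ⟨N, tsub_le_iff_right.1 hN.le⟩

theorem exists_forall_measure_le_boundedProj_add {ε : ℝ≥0∞} (hε : ε ≠ 0) :
    ∃ b : ℕ → ℕ, ∀ n, μ {t | ∃ σ, R σ t} ≤ μ (boundedProj R b n) + ε := by
  obtain ⟨δ, hδpos, hδsum⟩ := ENNReal.exists_pos_sum_of_countable hε ℕ
  choose N hN using fun b n =>
    exists_measure_boundedProj_le_add R μ b n (δ := δ n) (by simpa using (hδpos n).ne')
  -- `c n` fixes the first `n` bounds greedily; the bound `b i` is the one fixed at step `i + 1`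
  let c : ℕ → ℕ → ℕ := fun n => Nat.rec 0 (fun m c => Function.update c m (N c m)) n
  have hc_stable : ∀ m i, i < m → c m i = c (i + 1) i := by
    intro m i hi
    induction m with
    | zero => omega
    | succ m ih =>
      rcases Nat.lt_succ_iff_lt_or_eq.1 hi with hi | rfl
      · simp only [c] at ih ⊢
        rw [Function.update_of_ne hi.ne, ih hi]
      · rfl
  have hinv : ∀ n, μ {t | ∃ σ, R σ t} ≤
      μ (boundedProj R (c n) n) + ∑ i ∈ Finset.range n, (δ i : ℝ≥0∞) := by
    intro n
    induction n with
    | zero => simp [c, boundedProj_zero]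
    | succ n ih =>
      calc μ {t | ∃ σ, R σ t}
          ≤ μ (boundedProj R (c n) n) + ∑ i ∈ Finset.range n, (δ i : ℝ≥0∞) := ih
        _ ≤ μ (boundedProj R (c (n + 1)) (n + 1)) + δ n +
              ∑ i ∈ Finset.range n, (δ i : ℝ≥0∞) := by
          gcongr; exact hN (c n) n
        _ = _ := by rw [Finset.sum_range_succ]; ring
  refine ⟨fun i => c (i + 1) i, fun n => (hinv n).trans ?_⟩
  rw [boundedProj_congr R fun i hi => hc_stable n i hi]
  gcongr
  exact (ENNReal.sum_le_tsum _).trans hδsum.le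

end Capacity

def prefixPath (next : List ℕ → T → ℕ) (t : T) : ℕ → List ℕ
  | 0 => []
  | n + 1 => next (prefixPath next t n) t :: prefixPath next t n

theorem res_next_prefixPath (next : List ℕ → T → ℕ) (t : T) (n : ℕ) :
    res (fun m => next (prefixPath next t m) t) n = prefixPath next t n := by
  induction n with
  | zero => rfl
  | succ n ih => rw [res_succ, ih, prefixPath]

variable [MeasurableSpace T]

theorem nullMeasurableSet_of_forall_exists_measurableSet_subset {μ : Measure T}
    [IsFiniteMeasure μ] {s : Set T} (h : ∀ ε ≠ 0, ∃ t ⊆ s, MeasurableSet t ∧ μ s ≤ μ t + ε) :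
    NullMeasurableSet s μ := by
  choose t hts ht hμt using fun n : ℕ => h (n : ℝ≥0∞)⁻¹ (ENNReal.inv_ne_zero.2 (by simp))
  have hle : μ s ≤ μ (⋃ n, t n) := by
    refine ENNReal.le_of_forall_pos_le_add fun ε hε _ => ?_
    obtain ⟨n, hn⟩ := ENNReal.exists_inv_nat_lt (a := ε) (by simpa using hε.ne')
    exact (hμt n).trans (add_le_add (measure_mono (subset_iUnion t n)) hn.le)
  have hmeas := (MeasurableSet.iUnion ht).nullMeasurableSet (μ := μ)
  exact hmeas.congr (ae_eq_of_subset_of_measure_ge (iUnion_subset hts) hle hmeas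
    (measure_ne_top μ s))

theorem iInter_closure_image_inter_pi_Iio_subset {Y : Type*} [TopologicalSpace Y] [T2Space Y]
    [FirstCountableTopology Y] {h : (ℕ → ℕ) → Y} (hh : Continuous h) {C : Set (ℕ → ℕ)}
    (hC : IsClosed C) (b : ℕ → ℕ) :
    ⋂ n, closure (h '' (C ∩ (Iio n).pi fun i => Iic (b i))) ⊆
      h '' (C ∩ univ.pi fun i => Iic (b i)) := by
  intro y hy
  obtain ⟨V, hV⟩ := (𝓝 y).exists_antitone_basis
  have hσ : ∀ n, ∃ σ ∈ C ∩ (Iio n).pi (fun i => Iic (b i)), h σ ∈ V n := fun n => by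
    obtain ⟨_, hyV, σ, hσ, rfl⟩ := mem_closure_iff_nhds.1 (mem_iInter.1 hy n) _ (hV.mem n)
    exact ⟨σ, hσ, hyV⟩
  choose σ hσC hσV using hσ
  -- below `n`, `σ n` is bounded by `b`; from `n` on, by itself
  let M : ℕ → ℕ := fun i => max (b i) ((Finset.range (i + 1)).sup fun k => σ k i)
  have hσM : ∀ n, σ n ∈ univ.pi fun i => Iic (M i) := by
    intro n i _
    rcases lt_or_ge i n with hin | hni
    · exact le_max_of_le_left (mem_Iic.1 ((hσC n).2 i hin))
    · exact (Finset.le_sup (f := fun k => σ k i) (by simpa [Nat.lt_succ_iff] using hni)).trans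
        (le_max_right _ _)
  obtain ⟨σ₀, -, ψ, hψ, hlim⟩ :=
    (isCompact_univ_pi fun i => (finite_Iic (M i)).isCompact).tendsto_subseq hσM
  refine ⟨σ₀, ⟨hC.mem_of_tendsto hlim (Eventually.of_forall fun k => (hσC _).1), ?_⟩, ?_⟩
  · intro i _
    refine (isClosed_le (continuous_apply i) continuous_const).mem_of_tendsto hlim ?_
    filter_upwards [hψ.tendsto_atTop.eventually_ge_atTop (i + 1)] with k hk
    exact (hσC (ψ k)).2 i (by simp; omega)
  · exact tendsto_nhds_unique ((hh.tendsto σ₀).comp hlim)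
      ((hV.tendsto hσV).comp hψ.tendsto_atTop)

theorem nullMeasurableSet_preimage_image {μ : Measure T} [IsFiniteMeasure μ] {Y : Type*}
    [TopologicalSpace Y] [T2Space Y] [FirstCountableTopology Y] [MeasurableSpace Y]
    [OpensMeasurableSpace Y] {φ : T → Y} (hφ : Measurable φ) {h : (ℕ → ℕ) → Y}
    (hh : Continuous h) {C : Set (ℕ → ℕ)} (hC : IsClosed C) :
    NullMeasurableSet (φ ⁻¹' (h '' C)) μ := by
  refine nullMeasurableSet_of_forall_exists_measurableSet_subset fun ε hε => ?_
  obtain ⟨b, hb⟩ :=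
    exists_forall_measure_le_boundedProj_add (fun σ t => σ ∈ C ∧ h σ = φ t) μ hε
  let G : ℕ → Set T := fun n => φ ⁻¹' closure (h '' (C ∩ (Iio n).pi fun i => Iic (b i)))
  have hG_meas : ∀ n, MeasurableSet (G n) := fun n => hφ isClosed_closure.measurableSet
  have hG_anti : Antitone G := fun m n hmn =>
    preimage_mono <| closure_mono <| image_mono <| inter_subset_inter_right _
      fun _ hσ i hi => hσ i (Iio_subset_Iio hmn hi)
  have hproj_G : ∀ n, boundedProj (fun σ t => σ ∈ C ∧ h σ = φ t) b n ⊆ G n := by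
    rintro n t ⟨σ, hσb, hσC, hσt⟩
    exact subset_closure ⟨σ, ⟨hσC, hσb⟩, hσt⟩
  refine ⟨⋂ n, G n, ?_, MeasurableSet.iInter hG_meas, ?_⟩
  · rw [← preimage_iInter]
    exact preimage_mono ((iInter_closure_image_inter_pi_Iio_subset hh hC b).trans
      (image_mono inter_subset_left))
  · rw [hG_anti.measure_iInter (fun n => (hG_meas n).nullMeasurableSet) ⟨0, measure_ne_top _ _⟩,
      ENNReal.iInf_add]
    exact le_iInf fun n => (hb n).trans (by gcongr; exact hproj_G n)

theorem measurableSet_prefixPath_eq {next : List ℕ → T → ℕ} (hnext : ∀ l, Measurable (next l))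
    (n : ℕ) (l : List ℕ) : MeasurableSet {t | prefixPath next t n = l} := by
  induction n generalizing l with
  | zero => exact MeasurableSet.const ([] = l)
  | succ n ih =>
    rcases l with _ | ⟨k, l⟩
    · simp [prefixPath]
    · have : {t | prefixPath next t (n + 1) = k :: l} =
          {t | prefixPath next t n = l} ∩ next l ⁻¹' {k} := by
        ext t
        simp only [prefixPath, List.cons.injEq, mem_inter_iff, mem_preimage, mem_singleton_iff]
        exact ⟨fun h => ⟨h.2, h.2 ▸ h.1⟩, fun h => ⟨h.1 ▸ h.2, h.1⟩⟩
      rw [this]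
      exact (ih l).inter (hnext l (measurableSet_singleton k))

theorem measurable_next_prefixPath {next : List ℕ → T → ℕ} (hnext : ∀ l, Measurable (next l)) :
    Measurable fun t n => next (prefixPath next t n) t := by
  refine measurable_pi_iff.2 fun n => measurable_to_countable' fun k => ?_
  have : (fun t => next (prefixPath next t n) t) ⁻¹' {k} =
      ⋃ l, {t | prefixPath next t n = l} ∩ next l ⁻¹' {k} := by
    ext t; simp
  rw [this]
  exact MeasurableSet.iUnion fun l =>
    (measurableSet_prefixPath_eq hnext n l).inter (hnext l (measurableSet_singleton k))

theorem exists_measurable_forall_mem_res {U : List ℕ → Set T} (hU : ∀ l, MeasurableSet (U l))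
    (hnil : ∀ t, t ∈ U []) (hcons : ∀ l, U l ⊆ ⋃ k, U (k :: l)) :
    ∃ τ : T → ℕ → ℕ, Measurable τ ∧ ∀ t n, t ∈ U (res (τ t) n) := by
  classical
  -- the disjunct `t ∉ U l` makes the search total, so that `measurable_find` applies
  have hex : ∀ l t, ∃ k, t ∈ U (k :: l) ∨ t ∉ U l := fun l t => by
    by_cases ht : t ∈ U l
    · obtain ⟨k, hk⟩ := mem_iUnion.1 (hcons l ht)
      exact ⟨k, .inl hk⟩
    · exact ⟨0, .inr ht⟩
  let next : List ℕ → T → ℕ := fun l t => Nat.find (hex l t)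
  have hnext : ∀ l, Measurable (next l) := fun l =>
    measurable_find (hex l) fun k => (hU _).union (hU l).compl
  have hmem : ∀ t n, t ∈ U (prefixPath next t n) := by
    intro t n
    induction n with
    | zero => exact hnil t
    | succ n ih => exact (Nat.find_spec (hex _ t)).resolve_right (not_not.2 ih)
  exact ⟨_, measurable_next_prefixPath hnext,
    fun t n => res_next_prefixPath next t n ▸ hmem t n⟩

theorem isClosed_setOf_res_length_eq (l : List ℕ) :
    IsClosed {σ : ℕ → ℕ | res σ l.length = l} := by
  induction l with
  | nil => simp
  | cons k l ih =>
    have : {σ : ℕ → ℕ | res σ (k :: l).length = k :: l} =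
        {σ | σ l.length = k} ∩ {σ | res σ l.length = l} := by
      ext σ; simp [res_succ]
    rw [this]
    exact (isClosed_eq (continuous_apply _) continuous_const).inter ih

theorem tendsto_of_forall_res_eq {σ : ℕ → ℕ → ℕ} {τ : ℕ → ℕ} (h : ∀ n, res (σ n) n = res τ n) :
    Tendsto σ atTop (𝓝 τ) :=
  tendsto_pi_nhds.2 fun i => tendsto_atTop_of_eventually_const (i₀ := i + 1)
    fun n hn => res_eq_res.1 (h n) (by omega)

theorem exists_measurable_lift (μ : Measure T) [IsFiniteMeasure μ] [μ.IsComplete]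
    {Y : Type*} [TopologicalSpace Y] [T2Space Y] [FirstCountableTopology Y] [MeasurableSpace Y]
    [OpensMeasurableSpace Y] {φ : T → Y} (hφ : Measurable φ) {h : (ℕ → ℕ) → Y}
    (hh : Continuous h) (hφh : ∀ t, φ t ∈ range h) :
    ∃ τ : T → ℕ → ℕ, Measurable τ ∧ ∀ t, h (τ t) = φ t := by
  let U : List ℕ → Set T := fun l => φ ⁻¹' (h '' {σ | res σ l.length = l})
  have hU : ∀ l, MeasurableSet (U l) := fun l =>
    (nullMeasurableSet_preimage_image (μ := μ) hφ hh
      (isClosed_setOf_res_length_eq l)).measurable_of_complete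
  have hnil : ∀ t, t ∈ U [] := fun t => by
    obtain ⟨σ, hσ⟩ := hφh t
    exact ⟨σ, rfl, hσ⟩
  have hcons : ∀ l, U l ⊆ ⋃ k, U (k :: l) := by
    rintro l t ⟨σ, hσ, hσt⟩
    refine mem_iUnion.2 ⟨σ l.length, σ, ?_, hσt⟩
    simp only [mem_ofPred_eq, List.length_cons, res_succ] at hσ ⊢
    rw [hσ]
  obtain ⟨τ, hτ, hτU⟩ := exists_measurable_forall_mem_res hU hnil hcons
  refine ⟨τ, hτ, fun t => ?_⟩
  choose σ hσ hσt using hτU t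
  have hlim : Tendsto σ atTop (𝓝 (τ t)) :=
    tendsto_of_forall_res_eq fun n => by simpa [res_length] using hσ n
  exact tendsto_nhds_unique ((hh.tendsto _).comp hlim) (by simp [Function.comp_def, hσt])

section Reduction

variable {α β : Type*} [MeasurableSpace α] [MeasurableSpace β]

def IsNatNatPullback (H : Set (α × β)) : Prop :=
  ∃ φ : α → ℕ → ℕ, Measurable φ ∧ ∃ H' : Set ((ℕ → ℕ) × β), MeasurableSet H' ∧
    H = Prod.map φ id ⁻¹' H'

theorem IsNatNatPullback.compl {H : Set (α × β)} (hH : IsNatNatPullback H) :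
    IsNatNatPullback Hᶜ := by
  obtain ⟨φ, hφ, H', hH', rfl⟩ := hH
  exact ⟨φ, hφ, H'ᶜ, hH'.compl, rfl⟩

theorem isNatNatPullback_iUnion {H : ℕ → Set (α × β)} (hH : ∀ i, IsNatNatPullback (H i)) :
    IsNatNatPullback (⋃ i, H i) := by
  choose φ hφ H' hH' hHeq using hH
  let Φ : α → ℕ → ℕ := fun t n => φ (Nat.unpair n).1 t (Nat.unpair n).2
  let π : ℕ → (ℕ → ℕ) → ℕ → ℕ := fun i c j => c (Nat.pair i j)
  have hπ : ∀ i, Measurable (π i) := fun i => measurable_pi_lambda _ fun j => measurable_pi_apply _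
  have hπΦ : ∀ i, π i ∘ Φ = φ i := fun i => by ext t j; simp [Φ, π]
  refine ⟨Φ, measurable_pi_lambda _ fun n => (measurable_pi_apply _).comp (hφ _),
    ⋃ i, Prod.map (π i) id ⁻¹' H' i,
    MeasurableSet.iUnion fun i => ((hπ i).prodMap measurable_id) (hH' i), ?_⟩
  simp_rw [preimage_iUnion, hHeq, ← preimage_comp, Prod.map_comp_map, hπΦ]
  rfl

theorem isNatNatPullback_fst_preimage {A : Set α} (hA : MeasurableSet A) :
    IsNatNatPullback (Prod.fst ⁻¹' A : Set (α × β)) := by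
  refine ⟨fun t _ => A.indicator 1 t, measurable_pi_lambda _ fun _ => measurable_one.indicator hA,
    {p | p.1 0 = 1}, measurableSet_eq_fun ((measurable_pi_apply 0).comp measurable_fst)
      measurable_const, ?_⟩
  ext ⟨t, x⟩
  by_cases ht : t ∈ A <;> simp [ht]

theorem isNatNatPullback_snd_preimage {B : Set β} (hB : MeasurableSet B) :
    IsNatNatPullback (Prod.snd ⁻¹' B : Set (α × β)) :=
  ⟨0, measurable_const, Prod.snd ⁻¹' B, measurable_snd hB, rfl⟩

theorem _root_.MeasurableSet.isNatNatPullback {H : Set (α × β)} (hH : MeasurableSet H) :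
    IsNatNatPullback H := by
  let m : MeasurableSpace (α × β) :=
    { MeasurableSet' := IsNatNatPullback
      measurableSet_empty := ⟨0, measurable_const, ∅, .empty, rfl⟩
      measurableSet_compl := fun _ h => h.compl
      measurableSet_iUnion := fun _ h => isNatNatPullback_iUnion h }
  have hle : Prod.instMeasurableSpace ≤ m :=
    sup_le (MeasurableSpace.comap_le_iff_le_map.2 fun _ hA => isNatNatPullback_fst_preimage hA)
      (MeasurableSpace.comap_le_iff_le_map.2 fun _ hB => isNatNatPullback_snd_preimage hB)
  exact hle H hH

end Reduction

theorem exists_measurable_selector (μ : Measure T) [IsFiniteMeasure μ] [μ.IsComplete]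
    {E : Type*} [TopologicalSpace E] [PolishSpace E] [MeasurableSpace E] [BorelSpace E]
    {Γ : T → Set E} (hgraph : MeasurableSet {p : T × E | p.2 ∈ Γ p.1})
    (hne : ∀ t, (Γ t).Nonempty) :
    ∃ f : T → E, Measurable f ∧ ∀ t, f t ∈ Γ t := by
  obtain ⟨φ, hφ, H', hH', hgraph_eq⟩ := hgraph.isNatNatPullback
  have hmem : ∀ t x, x ∈ Γ t ↔ (φ t, x) ∈ H' := fun t x =>
    Set.ext_iff.1 hgraph_eq (t, x)
  rcases (AnalyticSet_def H').mp hH'.analyticSet with hempty | ⟨G, hG, hrange⟩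
  · have : IsEmpty T := ⟨fun t => by
      obtain ⟨x, hx⟩ := hne t
      simpa [hempty] using (hmem t x).1 hx⟩
    exact ⟨isEmptyElim, fun _ _ => Subsingleton.measurableSet, isEmptyElim⟩
  have hφG : ∀ t, φ t ∈ range (Prod.fst ∘ G) := fun t => by
    obtain ⟨x, hx⟩ := hne t
    obtain ⟨σ, hσ⟩ := hrange ▸ (hmem t x).1 hx
    exact ⟨σ, by simp [hσ]⟩
  obtain ⟨τ, hτ, hGτ⟩ := exists_measurable_lift μ hφ (continuous_fst.comp hG) hφG
  refine ⟨fun t => (G (τ t)).2, (continuous_snd.comp hG).measurable.comp hτ, fun t => ?_⟩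
  rw [hmem, ← show (G (τ t)).1 = φ t from hGτ t, ← hrange]
  exact mem_range_self _

end MeasureTheory

/-- An integrably bounded multifunction with (nonempty values and)
measurable graph into a separable Banach space admits a Bochner integrable selector;
hence its Bochner integral is nonempty. -/
theorem integrable_selector_exists
    {T : Type*} [MeasurableSpace T] (μ : Measure T) [IsFiniteMeasure μ]
    (hμ : μ.IsComplete)
    {E : Type*} [NormedAddCommGroup E] [NormedSpace ℝ E] [CompleteSpace E]
    [TopologicalSpace.SeparableSpace E] [MeasurableSpace E] [BorelSpace E]
    (Γ : T → Set E)
    (hne : ∀ t, (Γ t).Nonempty)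
    (hgraph : MeasurableSet {p : T × E | p.2 ∈ Γ p.1})
    (ψ : T → ℝ) (hψ : Integrable ψ μ)
    (hbound : ∀ᵐ t ∂μ, ∀ x ∈ Γ t, ‖x‖ < ψ t) :
    (∃ f : T → E, Integrable f μ ∧ ∀ᵐ t ∂μ, f t ∈ Γ t) ∧
      {y : E | ∃ f : T → E, Integrable f μ ∧ (∀ᵐ t ∂μ, f t ∈ Γ t) ∧
        y = ∫ t, f t ∂μ}.Nonempty := by
  obtain ⟨f, hf, hfΓ⟩ := exists_measurable_selector μ hgraph hne
  have hf_int : Integrable f μ := hψ.mono' hf.aestronglyMeasurable <| by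
    filter_upwards [hbound] with t ht using (ht _ (hfΓ t)).le
  exact ⟨⟨f, hf_int, .of_forall hfΓ⟩, _, f, hf_int, .of_forall hfΓ, rfl⟩
end
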